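/- If R is a finite local ring with maximal ideal J, then the distant graph G(R,Δ) is a complete multipartite graph: its vertex set partitions into |R/J| + 1 classes of size |J| each (the radical-parallelism classes), and two vertices are adjacent if and only if they lie in different classes. -/

import Mathlib

/-!
Over a local ring every point of `P(R)` is uniquely `R(1, b)` with `b ∈ R` or `R(j, 1)` with
`j ∈ J`, and `R v Δ R w` holds iff the matrix with rows `v`, `w` is invertible. By a Schur
complement, `!![1, b; c, d]` is invertible iff `d - c b` is a unit, so `R(1, b) Δ R(1, b')` iff
`b' - b ∉ J`, `R(1, b) Δ R(j, 1)` always (`1 - j b` is a unit), and `R(j, 1) Δ R(j', 1)` never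
(swap the columns). Hence distance means having different images in `P(R/J) = R/J ∪ {∞}`,
whose fibres are the cosets of `J` and, over `∞`, the points `R(j, 1)`: `|R/J| + 1` classes of
size `|J|`.
-/

open Matrix

/-- The cyclic left submodule `R(a,b)` of `R²`. -/
def ptSub (R : Type*) [Ring R] (a b : R) : Submodule R (Fin 2 → R) :=
  Submodule.span R {![a, b]}

/-- The right action of an invertible matrix `g` on submodules of `R²`, via `v ↦ v ᵥ* g`. -/
def mulGL (R : Type*) [Ring R] (g : (Matrix (Fin 2) (Fin 2) R)ˣ)
    (p : Submodule R (Fin 2 → R)) : Submodule R (Fin 2 → R) :=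
  p.map (Matrix.vecMulLinear g.val)

/-- The projective line over `R`: the orbit of `R(1,0)` under `GL₂(R)`. -/
def projLine (R : Type*) [Ring R] : Set (Submodule R (Fin 2 → R)) :=
  {p | ∃ g, mulGL R g (ptSub R 1 0) = p}

/-- The distant relation: the orbit of the pair `(R(1,0), R(0,1))` under `GL₂(R)`. -/
def IsDistant (R : Type*) [Ring R] (p q : Submodule R (Fin 2 → R)) : Prop :=
  ∃ g, mulGL R g (ptSub R 1 0) = p ∧ mulGL R g (ptSub R 0 1) = q

namespace IsLocalRing

variable {R : Type*} [Ring R] [IsLocalRing R]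

-- The idempotent `b * a` is `1` or, when `1 - b * a` is the unit, `0`;
-- but `0` forces `1 = a b a b = 0`.
instance isDedekindFiniteMonoid : IsDedekindFiniteMonoid R where
  mul_eq_one_symm {a b} hab := by
    have idem : b * a * (b * a) = b * a := by rw [mul_assoc b, ← mul_assoc a, hab, one_mul]
    rcases isUnit_or_isUnit_of_add_one (add_sub_cancel (b * a) 1) with hu | hu
    · exact hu.mul_left_cancel (idem.trans (mul_one _).symm)
    · have hzero : b * a = 0 := hu.mul_left_eq_zero.mp (by rw [mul_sub, mul_one, idem, sub_self])
      refine absurd ?_ (one_ne_zero (α := R))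
      calc (1 : R) = a * b * (a * b) := by rw [hab, one_mul]
        _ = a * (b * a) * b := by simp only [mul_assoc]
        _ = 0 := by rw [hzero, mul_zero, zero_mul]

theorem isUnit_one_sub_of_not_isUnit {a : R} (ha : ¬IsUnit a) : IsUnit (1 - a) :=
  (isUnit_or_isUnit_of_add_one (add_sub_cancel a 1)).resolve_left ha

variable (R) in
def nonunitsAddSubgroup : AddSubgroup R where
  toAddSubmonoid := nonunitsAddSubmonoid R
  neg_mem' := (IsUnit.neg_iff _).not.mpr

@[simp]
theorem mem_nonunitsAddSubgroup {a : R} : a ∈ nonunitsAddSubgroup R ↔ ¬IsUnit a := Iff.rfl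

theorem exists_isUnit_row_entry {n : Type*} [Fintype n] [DecidableEq n]
    (g : (Matrix n n R)ˣ) (i : n) : ∃ j, IsUnit ((g : Matrix n n R) i j) := by
  have : IsUnit (∑ j, (g : Matrix n n R) i j * (↑g⁻¹ : Matrix n n R) j i) := by
    rw [← mul_apply, g.mul_inv, one_apply_eq]; exact isUnit_one
  obtain ⟨j, -, hj⟩ := exists_of_isUnit_sum this
  exact ⟨j, (IsUnit.mul_iff.mp hj).1⟩

end IsLocalRing

section DedekindFinite
variable {R : Type*} [Ring R] [IsDedekindFiniteMonoid R]

theorem exists_isUnit_smul_eq_of_span_singleton_eq {n : Type*} {x y : n → R}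
    (h : Submodule.span R {x} = Submodule.span R {y}) (hy : ∃ j, IsUnit (y j)) :
    ∃ c : R, IsUnit c ∧ c • y = x := by
  obtain ⟨c, hc⟩ := Submodule.mem_span_singleton.mp (h ▸ Submodule.mem_span_singleton_self x)
  obtain ⟨d, hd⟩ := Submodule.mem_span_singleton.mp (h ▸ Submodule.mem_span_singleton_self y)
  obtain ⟨j, hj⟩ := hy
  have hdc : d * c * y j = 1 * y j := by
    rw [one_mul, ← smul_eq_mul, ← Pi.smul_apply, ← smul_smul, hc, hd]
  exact ⟨c, .of_mul_eq_one_right d (hj.mul_right_cancel hdc), hc⟩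

end DedekindFinite

namespace Matrix

variable {R : Type*} [Ring R]

theorem isUnit_swap_fin_two : IsUnit (!![0, 1; 1, 0] : Matrix (Fin 2) (Fin 2) R) :=
  have h : (!![0, 1; 1, 0] * !![0, 1; 1, 0] : Matrix (Fin 2) (Fin 2) R) = 1 := by
    simp [one_fin_two]
  ⟨⟨_, _, h, h⟩, rfl⟩

theorem isUnit_fin_two_swap_rows (a b c d : R) :
    IsUnit !![c, d; a, b] ↔ IsUnit !![a, b; c, d] := by
  obtain ⟨σ, hσ⟩ := isUnit_swap_fin_two (R := R)
  rw [← Units.isUnit_units_mul σ, hσ, mul_fin_two]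
  simp

theorem isUnit_fin_two_swap_cols (a b c d : R) :
    IsUnit !![b, a; d, c] ↔ IsUnit !![a, b; c, d] := by
  obtain ⟨σ, hσ⟩ := isUnit_swap_fin_two (R := R)
  rw [← Units.isUnit_mul_units _ σ, hσ, mul_fin_two]
  simp

theorem isUnit_lowerUnitriangular_fin_two (c : R) : IsUnit !![1, 0; c, 1] :=
  ⟨⟨_, !![1, 0; -c, 1], by simp [one_fin_two], by simp [one_fin_two]⟩, rfl⟩

theorem isUnit_upperTriangular_fin_two_iff (b e : R) : IsUnit !![1, b; 0, e] ↔ IsUnit e := by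
  constructor
  · rintro ⟨X, hX⟩
    have h1 := X.mul_inv
    have h2 := X.inv_mul
    rw [hX, eta_fin_two (↑X⁻¹ : Matrix (Fin 2) (Fin 2) R), mul_fin_two, one_fin_two] at h1 h2
    simp only [one_mul, zero_mul, zero_add, mul_one, mul_zero, add_zero,
      EmbeddingLike.apply_eq_iff_eq, vecCons_inj, and_true] at h1 h2
    exact isUnit_iff_exists.mpr ⟨_, h1.2.2, by simpa [h2.2.1] using h2.2.2⟩
  · rintro ⟨u, rfl⟩
    exact ⟨⟨_, !![1, -(b * ↑u⁻¹); 0, ↑u⁻¹], by simp [one_fin_two],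
      by simp [one_fin_two]⟩, rfl⟩

theorem isUnit_fin_two_iff_isUnit_sub_mul (b c d : R) :
    IsUnit !![1, b; c, d] ↔ IsUnit (d - c * b) := by
  obtain ⟨L, hL⟩ := isUnit_lowerUnitriangular_fin_two c
  have : !![1, b; c, d] = L * !![1, b; 0, d - c * b] := by simp [hL]
  rw [this, Units.isUnit_units_mul, isUnit_upperTriangular_fin_two_iff]

end Matrix

section ProjectiveLine
variable {R : Type*} [Ring R]

open Submodule

theorem mulGL_span_singleton (g : (Matrix (Fin 2) (Fin 2) R)ˣ) (x : Fin 2 → R) :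
    mulGL R g (span R {x}) = span R {x ᵥ* g} := by
  rw [mulGL, map_span, Set.image_singleton, vecMulLinear_apply]

theorem mulGL_ptSub_one_zero (g : (Matrix (Fin 2) (Fin 2) R)ˣ) :
    mulGL R g (ptSub R 1 0) = span R {(g : Matrix (Fin 2) (Fin 2) R) 0} := by
  rw [ptSub, mulGL_span_singleton]
  congr
  ext j
  simp [vecMul, vecHead, vecTail]

theorem mulGL_ptSub_zero_one (g : (Matrix (Fin 2) (Fin 2) R)ˣ) :
    mulGL R g (ptSub R 0 1) = span R {(g : Matrix (Fin 2) (Fin 2) R) 1} := by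
  rw [ptSub, mulGL_span_singleton]
  congr
  ext j
  simp [vecMul, vecHead, vecTail]

theorem IsDistant.mem_projLine {p q : Submodule R (Fin 2 → R)} (h : IsDistant R p q) :
    p ∈ projLine R :=
  let ⟨g, hp, _⟩ := h
  ⟨g, hp⟩

variable [IsLocalRing R]

theorem isDistant_span_iff (v w : Fin 2 → R) :
    IsDistant R (span R {v}) (span R {w}) ↔ IsUnit (of ![v, w]) := by
  constructor
  · rintro ⟨g, hv, hw⟩
    rw [mulGL_ptSub_one_zero] at hv
    rw [mulGL_ptSub_zero_one] at hw
    obtain ⟨c, hc, rfl⟩ := exists_isUnit_smul_eq_of_span_singleton_eq hv.symm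
      (IsLocalRing.exists_isUnit_row_entry g 0)
    obtain ⟨d, hd, rfl⟩ := exists_isUnit_smul_eq_of_span_singleton_eq hw.symm
      (IsLocalRing.exists_isUnit_row_entry g 1)
    have : of ![c • (g : Matrix (Fin 2) (Fin 2) R) 0, d • (g : Matrix (Fin 2) (Fin 2) R) 1] =
        diagonal ![c, d] * g := by
      ext i j
      fin_cases i <;> simp [diagonal_mul]
    have hdiag : IsUnit (diagonal ![c, d]) :=
      (Pi.isUnit_iff.mpr (Fin.forall_fin_two.mpr ⟨hc, hd⟩)).map (diagonalRingHom (Fin 2) R)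
    rw [this]
    exact hdiag.mul g.isUnit
  · rintro ⟨g, hg⟩
    refine ⟨g, ?_, ?_⟩
    · rw [mulGL_ptSub_one_zero, hg]; rfl
    · rw [mulGL_ptSub_zero_one, hg]; rfl

theorem isDistant_ptSub_iff (a b c d : R) :
    IsDistant R (ptSub R a b) (ptSub R c d) ↔ IsUnit !![a, b; c, d] :=
  isDistant_span_iff _ _

end ProjectiveLine

section Parametrization
variable {R : Type*} [Ring R] [IsLocalRing R]

open IsLocalRing Submodule

variable (R) in
def projPoint : R ⊕ nonunitsAddSubgroup R → Submodule R (Fin 2 → R) :=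
  Sum.elim (fun b => ptSub R 1 b) (fun j => ptSub R j 1)

theorem projPoint_mem_projLine (x : R ⊕ nonunitsAddSubgroup R) :
    projPoint R x ∈ projLine R := by
  rcases x with b | j
  · refine IsDistant.mem_projLine (q := ptSub R 0 1) ?_
    rw [projPoint, Sum.elim_inl, isDistant_ptSub_iff, isUnit_fin_two_iff_isUnit_sub_mul,
      zero_mul, sub_zero]
    exact isUnit_one
  · refine IsDistant.mem_projLine (q := ptSub R 1 0) ?_
    rw [projPoint, Sum.elim_inr, isDistant_ptSub_iff, isUnit_fin_two_swap_rows,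
      isUnit_fin_two_iff_isUnit_sub_mul, mul_zero, sub_zero]
    exact isUnit_one

theorem projPoint_injective : Function.Injective (projPoint R) := by
  rintro (b | ⟨j, hj⟩) (b' | ⟨j', hj'⟩) h <;>
    obtain ⟨c, -, hcv⟩ :=
      exists_isUnit_smul_eq_of_span_singleton_eq h (by simp [Fin.exists_fin_two]) <;>
    simp only [smul_cons, smul_eq_mul, mul_one, smul_empty, funext_iff, Fin.forall_fin_two,
      cons_val_zero, cons_val_one, cons_val_fin_one] at hcv
  · simp [← hcv.2, hcv.1]
  · exact absurd (.of_mul_eq_one_right c hcv.1) hj'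
  · exact absurd (hcv.1 ▸ .of_mul_eq_one b' hcv.2) hj
  · simp [← hcv.1, hcv.2]

theorem exists_projPoint_eq {p : Submodule R (Fin 2 → R)} (hp : p ∈ projLine R) :
    ∃ x, projPoint R x = p := by
  obtain ⟨g, rfl⟩ := hp
  rw [mulGL_ptSub_one_zero]
  set v := (g : Matrix (Fin 2) (Fin 2) R) 0
  have hrow : IsUnit (v 0) ∨ IsUnit (v 1) :=
    Fin.exists_fin_two.mp (exists_isUnit_row_entry g 0)
  by_cases h0 : IsUnit (v 0)
  · obtain ⟨u, hu⟩ := h0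
    have hv : ![1, ↑u⁻¹ * v 1] = u⁻¹ • v := by
      ext i; fin_cases i <;> simp [← hu, Units.smul_def]
    exact ⟨.inl (↑u⁻¹ * v 1), by simp only [projPoint, Sum.elim_inl, ptSub, hv,
      span_singleton_group_smul_eq]⟩
  · obtain ⟨u, hu⟩ := hrow.resolve_left h0
    have hv : ![↑u⁻¹ * v 0, 1] = u⁻¹ • v := by
      ext i; fin_cases i <;> simp [← hu, Units.smul_def]
    exact ⟨.inr ⟨↑u⁻¹ * v 0, (Units.isUnit_units_mul _ _).not.mpr h0⟩, by
      simp only [projPoint, Sum.elim_inr, ptSub, hv, span_singleton_group_smul_eq]⟩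

end Parametrization

section RadicalClass
variable {R : Type*} [Ring R] [IsLocalRing R]

open IsLocalRing

variable (R) in
noncomputable def projLineEquiv : R ⊕ nonunitsAddSubgroup R ≃ projLine R :=
  Equiv.ofBijective (fun x => ⟨projPoint R x, projPoint_mem_projLine x⟩)
    ⟨fun _ _ h => projPoint_injective (congrArg Subtype.val h),
      fun ⟨_, hp⟩ => (exists_projPoint_eq hp).imp fun _ hx => Subtype.ext hx⟩

theorem projPoint_projLineEquiv_symm (p : projLine R) :
    projPoint R ((projLineEquiv R).symm p) = p :=
  congrArg Subtype.val ((projLineEquiv R).apply_symm_apply p)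

variable (R) in
/-- The image in `P(R/J)`, where `P(R/J)` is modelled as `Option (R ⧸ J)`:
`R(1, b) ↦ (R/J)(1, b̄) = some b̄` and `R(j, 1) ↦ (R/J)(0, 1) = none`. -/
def radicalClass : R ⊕ nonunitsAddSubgroup R → Option (R ⧸ nonunitsAddSubgroup R) :=
  Sum.elim (fun b => some b) (fun _ => none)

theorem isDistant_projPoint_iff (x y : R ⊕ nonunitsAddSubgroup R) :
    IsDistant R (projPoint R x) (projPoint R y) ↔ radicalClass R x ≠ radicalClass R y := by
  rcases x with b | ⟨j, hj⟩ <;> rcases y with b' | ⟨j', hj'⟩ <;>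
    simp only [projPoint, radicalClass, Sum.elim_inl, Sum.elim_inr, isDistant_ptSub_iff]
  · rw [isUnit_fin_two_iff_isUnit_sub_mul, one_mul, ne_eq, Option.some_inj, QuotientAddGroup.eq,
      mem_nonunitsAddSubgroup, not_not, neg_add_eq_sub]
  · rw [isUnit_fin_two_iff_isUnit_sub_mul]
    exact iff_of_true (isUnit_one_sub_of_not_isUnit fun h => hj' (IsUnit.mul_iff.mp h).1)
      (Option.some_ne_none _)
  · rw [isUnit_fin_two_swap_rows, isUnit_fin_two_iff_isUnit_sub_mul]
    exact iff_of_true (isUnit_one_sub_of_not_isUnit fun h => hj (IsUnit.mul_iff.mp h).1)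
      (Option.some_ne_none _).symm
  · rw [isUnit_fin_two_swap_cols, isUnit_fin_two_iff_isUnit_sub_mul, one_mul]
    exact iff_of_false ((nonunitsAddSubgroup R).sub_mem hj' hj) (not_not.mpr rfl)

theorem card_quotient_nonunitsAddSubgroup [Finite R] :
    Nat.card (R ⧸ nonunitsAddSubgroup R) = Nat.card R / Nat.card (nonunitsAddSubgroup R) :=
  (Nat.div_eq_of_eq_mul_left Nat.card_pos
    (nonunitsAddSubgroup R).card_eq_card_quotient_mul_card_addSubgroup).symm

theorem card_radicalClass_fiber [Finite R] (o : Option (R ⧸ nonunitsAddSubgroup R)) :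
    Nat.card {x // radicalClass R x = o} = Nat.card (nonunitsAddSubgroup R) := by
  rw [Nat.card_congr Equiv.subtypeSum, Nat.card_sum]
  cases o with
  | none => simp [radicalClass]
  | some q =>
    simp only [radicalClass, Sum.elim_inl, Sum.elim_inr, Option.some_inj, reduceCtorEq]
    rw [Nat.card_congr (α := {a : R // (a : R ⧸ nonunitsAddSubgroup R) = q})
      (QuotientAddGroup.preimageMkEquivAddSubgroupProdSet _ {q}), Nat.card_prod]
    simp

end RadicalClass

theorem eq_iff_forall_iff_of_forall_iff_ne {V C : Type*} {f : V → C} {adj : V → V → Prop}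
    (h : ∀ p q, adj p q ↔ f p ≠ f q) (p q : V) : f p = f q ↔ ∀ r, adj p r ↔ adj q r :=
  ⟨fun hpq r => by rw [h, h, hpq],
    fun hr => by_contra fun hne => (h q q).mp ((hr q).mp ((h p q).mpr hne)) rfl⟩

/-- For a finite local ring `R` (every element or its complement to `1` is a
unit) with Jacobson radical `J` (the set of non-units), the distant graph is complete
multipartite: the vertex set splits into `|R/J| + 1` classes of size `|J|`, two vertices
are adjacent iff they lie in different classes, and the classes are exactly the
radical-parallelism classes (same distant neighbourhoods). -/
theorem local_distant_graph_complete_multipartite {R : Type*} [Ring R] [Fintype R]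
    [Nontrivial R] (hloc : ∀ a : R, IsUnit a ∨ IsUnit (1 - a)) :
    ∃ f : {p : Submodule R (Fin 2 → R) // p ∈ projLine R} →
        Fin (Fintype.card R / Nat.card {a : R // ¬IsUnit a} + 1),
      (∀ c, Nat.card {p // f p = c} = Nat.card {a : R // ¬IsUnit a}) ∧
      (∀ p q, IsDistant R p.1 q.1 ↔ f p ≠ f q) ∧
      (∀ p q, f p = f q ↔ ∀ r : {p : Submodule R (Fin 2 → R) // p ∈ projLine R},
        (IsDistant R p.1 r.1 ↔ IsDistant R q.1 r.1)) := by
  have := IsLocalRing.of_isUnit_or_isUnit_one_sub_self hloc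
  have hcard : Nat.card (Option (R ⧸ IsLocalRing.nonunitsAddSubgroup R)) =
      Fintype.card R / Nat.card {a : R // ¬IsUnit a} + 1 := by
    rw [Finite.card_option, card_quotient_nonunitsAddSubgroup, Nat.card_eq_fintype_card]; rfl
  let φ := Finite.equivFinOfCardEq hcard
  let f p := φ (radicalClass R ((projLineEquiv R).symm p))
  have hdist : ∀ p q, IsDistant R p.1 q.1 ↔ f p ≠ f q := fun p q => by
    rw [φ.injective.ne_iff, ← isDistant_projPoint_iff, projPoint_projLineEquiv_symm,
      projPoint_projLineEquiv_symm]
  refine ⟨f, fun c => ?_, hdist, eq_iff_forall_iff_of_forall_iff_ne hdist⟩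
  calc Nat.card {p // f p = c} = Nat.card {x // radicalClass R x = φ.symm c} :=
        Nat.card_congr ((projLineEquiv R).symm.subtypeEquiv fun _ => φ.eq_symm_apply.symm)
    _ = Nat.card {a : R // ¬IsUnit a} := card_radicalClass_fiber _
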